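/- Let (α, μ) be a measure space and let H = L²(α, μ; ℂ) be the corresponding complex Hilbert space of square-integrable functions. Let ι be an index type, (ψ i)_{i ∈ ι} a Hilbert basis of H, and λ : ι → ℝ with λ i > 0 for every i ∈ ι. Let f : α → ℝ be measurable with f x ≥ 0 for μ-almost every x. Suppose φ, ξ ∈ H satisfy: (a) ξ x = −(f x) • (φ x) for μ-almost every x ∈ α, and (b) ⟪ψ i, ξ⟫ = (λ i) • ⟪ψ i, φ⟫ for every i ∈ ι (this encodes the equation Lφ = −f·φ for an operator L diagonalized by the basis (ψ i) with positive eigenvalues λ i). Then φ = 0 in L². -/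

import Mathlib

/-!
Expanding in the eigenbasis, `re ⟪φ, ξ⟫ = ∑ λᵢ |⟪ψᵢ, φ⟫|² ≥ 0`, while pointwise
`re ⟪φ x, ξ x⟫ = -f x |φ x|² ≤ 0`. Hence every term `λᵢ |⟪ψᵢ, φ⟫|²` vanishes, and since `λᵢ > 0`
all coefficients of `φ` are zero.
-/

open MeasureTheory RCLike
open scoped InnerProductSpace

section

variable {𝕜 E : Type*} [RCLike 𝕜] [NormedAddCommGroup E] [InnerProductSpace 𝕜 E]

theorem re_inner_smul_self_nonpos [Module ℝ E] [IsScalarTower ℝ 𝕜 E] {r : ℝ} (hr : r ≤ 0)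
    (x : E) : re ⟪x, r • x⟫_𝕜 ≤ 0 := by
  rw [real_smul_eq_coe_smul (K := 𝕜), inner_smul_real_right, inner_self_eq_norm_sq_to_K,
    smul_re, ← ofReal_pow, ofReal_re]
  exact mul_nonpos_of_nonpos_of_nonneg hr (sq_nonneg _)

theorem MeasureTheory.L2.re_inner_nonpos_of_ae {α : Type*} [MeasurableSpace α] {μ : Measure α}
    {f g : Lp E 2 μ} (h : ∀ᵐ x ∂μ, re ⟪f x, g x⟫_𝕜 ≤ 0) : re ⟪f, g⟫_𝕜 ≤ 0 := by
  rw [L2.inner_def, ← integral_re (L2.integrable_inner f g)]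
  exact integral_nonpos_of_ae h

namespace HilbertBasis

variable {ι : Type*} (b : HilbertBasis ι 𝕜 E)

theorem eq_zero_of_forall_inner_eq_zero {x : E} (h : ∀ i, ⟪b i, x⟫_𝕜 = 0) : x = 0 :=
  b.repr.injective <| by ext i; simp [b.repr_apply_apply, h i]

theorem hasSum_re_inner_of_inner_eq_smul {lam : ι → ℝ} {x y : E}
    (h : ∀ i, ⟪b i, y⟫_𝕜 = (lam i : 𝕜) • ⟪b i, x⟫_𝕜) :
    HasSum (fun i ↦ lam i * ‖⟪b i, x⟫_𝕜‖ ^ 2) (re ⟪x, y⟫_𝕜) := by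
  have hterm : ∀ i, ⟪x, b i⟫_𝕜 * ⟪b i, y⟫_𝕜 = ((lam i * ‖⟪b i, x⟫_𝕜‖ ^ 2 : ℝ) : 𝕜) := by
    intro i
    rw [h i, ← inner_conj_symm, smul_eq_mul, mul_left_comm, RCLike.conj_mul]
    push_cast
    ring
  simpa only [hterm, reCLM_apply, ofReal_re] using reCLM.hasSum (b.hasSum_inner_mul_inner x y)

theorem eq_zero_of_re_inner_nonpos {lam : ι → ℝ} (hlam : ∀ i, 0 < lam i) {x y : E}
    (h : ∀ i, ⟪b i, y⟫_𝕜 = (lam i : 𝕜) • ⟪b i, x⟫_𝕜) (hxy : re ⟪x, y⟫_𝕜 ≤ 0) : x = 0 := by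
  have hnonneg : ∀ i, 0 ≤ lam i * ‖⟪b i, x⟫_𝕜‖ ^ 2 := fun i ↦ mul_nonneg (hlam i).le (sq_nonneg _)
  have hsum := b.hasSum_re_inner_of_inner_eq_smul h
  have hzero : re ⟪x, y⟫_𝕜 = 0 := le_antisymm hxy (hsum.nonneg hnonneg)
  rw [hzero, hasSum_zero_iff_of_nonneg hnonneg] at hsum
  refine b.eq_zero_of_forall_inner_eq_zero fun i ↦ ?_
  simpa [(hlam i).ne'] using congrFun hsum i

end HilbertBasis

end

theorem no_nonpositive_solution_general
    {α : Type*} [MeasurableSpace α] (μ : Measure α)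
    {ι : Type*} (ψ : HilbertBasis ι ℂ (Lp ℂ 2 μ))
    (lam : ι → ℝ) (hlam : ∀ i : ι, 0 < lam i)
    (f : α → ℝ) (hf_nonneg : ∀ᵐ x ∂μ, 0 ≤ f x)
    (φ ξ : Lp ℂ 2 μ)
    (heq : ∀ᵐ x ∂μ, ξ x = (-(f x)) • (φ x))
    (hdiag : ∀ i : ι, (inner ℂ (ψ i) ξ : ℂ) = (lam i : ℂ) • (inner ℂ (ψ i) φ : ℂ)) :
    φ = 0 := by
  refine ψ.eq_zero_of_re_inner_nonpos hlam hdiag (L2.re_inner_nonpos_of_ae ?_)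
  filter_upwards [heq, hf_nonneg] with x hξ hfx
  rw [hξ]
  exact re_inner_smul_self_nonpos (neg_nonpos.mpr hfx) _

/-- Claim 2.5 of the paper in functional-analytic form: if `L` is diagonalized by a Hilbert
basis of `L²(α, μ; ℂ)` with positive eigenvalues `lam i`, and `φ` solves `L φ = -f • φ`
with `f ≥ 0` a.e. (here `ξ` plays the role of `L φ`), then `φ = 0`. -/
theorem no_nonpositive_solution
    {α : Type*} [MeasurableSpace α] (μ : Measure α)
    {ι : Type*} (ψ : HilbertBasis ι ℂ (Lp ℂ 2 μ))
    (lam : ι → ℝ) (hlam : ∀ i : ι, 0 < lam i)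
    (f : α → ℝ) (hf_meas : Measurable f) (hf_nonneg : ∀ᵐ x ∂μ, 0 ≤ f x)
    (φ ξ : Lp ℂ 2 μ)
    (heq : ∀ᵐ x ∂μ, ξ x = (-(f x)) • (φ x))
    (hdiag : ∀ i : ι, (inner ℂ (ψ i) ξ : ℂ) = (lam i : ℂ) • (inner ℂ (ψ i) φ : ℂ)) :
    φ = 0 :=
  no_nonpositive_solution_general μ ψ lam hlam f hf_nonneg φ ξ heq hdiag
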